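/- If for each i, ∑_{j≠i} m_i m_j (b_i - b_j)/|a_i - a_j|³ = c·m_i·b_i for some constant c (the eigenvector condition), and ∑_i m_i conj(a_i) b_i = 0 (M̃-orthogonality of (a_i) and (b_i)), then ∑_{1≤i<j≤4} m_i m_j (conj(a_i)-conj(a_j))(b_i-b_j)/|a_i-a_j|³ = 0. -/

import Mathlib

open Finset

/-!
Multiply the `i`-th eigenvector equation by `conj (a i)` and sum over `i`. The right side becomes
`c * ∑ i, m i * conj (a i) * b i = 0`. On the left, since the kernel `m i * m j / ‖a i - a j‖ ^ 3`
is symmetric, the terms `(i, j)` and `(j, i)` combine into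
`m i * m j * (conj (a i) - conj (a j)) * (b i - b j) / ‖a i - a j‖ ^ 3`.
-/

theorem sum_ne_eq_sum_lt_add_swap {ι M : Type*} [Fintype ι] [LinearOrder ι] [AddCommMonoid M]
    (f : ι → ι → M) :
    ∑ i, ∑ j ∈ univ.filter (· ≠ i), f i j =
      ∑ i, ∑ j ∈ univ.filter (fun j => i < j), (f i j + f j i) := by
  have split : ∀ i : ι, univ.filter (· ≠ i) = univ.filter (i < ·) ∪ univ.filter (· < i) := by
    intro i; ext j
    simpa only [mem_filter, mem_univ, true_and, mem_union] using ne_iff_lt_or_gt.trans or_comm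
  have swap : ∑ i, ∑ j ∈ univ.filter (· < i), f i j = ∑ i, ∑ j ∈ univ.filter (i < ·), f j i :=
    sum_comm' (by simp)
  simp_rw [split, sum_add_distrib]
  rw [← swap, ← sum_add_distrib]
  refine sum_congr rfl fun i _ => sum_union ?_
  exact disjoint_filter.2 fun j _ h₁ h₂ => lt_asymm h₁ h₂

theorem sum_lt_mul_sub_mul_sub_eq_sum_mul_sum_ne {ι R : Type*} [Fintype ι] [LinearOrder ι]
    [CommRing R] (K : ι → ι → R) (hK : ∀ i j, K i j = K j i) (x y : ι → R) :
    ∑ i, ∑ j ∈ univ.filter (fun j => i < j), K i j * (x i - x j) * (y i - y j) =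
      ∑ i, x i * ∑ j ∈ univ.filter (· ≠ i), K i j * (y i - y j) := by
  simp_rw [mul_sum, sum_ne_eq_sum_lt_add_swap (fun i j => x i * (K i j * (y i - y j)))]
  refine sum_congr rfl fun i _ => sum_congr rfl fun j _ => ?_
  rw [hK j i]
  ring

theorem cross_term_vanishes_general (m : Fin 4 → ℝ) (a b : Fin 4 → ℂ) (c : ℂ)
    (heig : ∀ i, ∑ j ∈ Finset.univ.filter (· ≠ i),
        ((m i * m j : ℝ) : ℂ) * (b i - b j) / ((‖a i - a j‖ ^ 3 : ℝ) : ℂ) =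
        c * ((m i : ℝ) : ℂ) * b i)
    (horth : ∑ i, ((m i : ℝ) : ℂ) * starRingEnd ℂ (a i) * b i = 0) :
    ∑ i, ∑ j ∈ Finset.univ.filter (fun j => i < j),
        ((m i * m j : ℝ) : ℂ) * (starRingEnd ℂ (a i) - starRingEnd ℂ (a j)) * (b i - b j) /
          ((‖a i - a j‖ ^ 3 : ℝ) : ℂ) = 0 := by
  set K : Fin 4 → Fin 4 → ℂ := fun i j => ((m i * m j : ℝ) : ℂ) / ((‖a i - a j‖ ^ 3 : ℝ) : ℂ)
  have hK : ∀ i j, K i j = K j i := fun i j => by simp only [K, mul_comm (m i), norm_sub_rev]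
  calc _ = ∑ i, ∑ j ∈ univ.filter (fun j => i < j),
        K i j * (starRingEnd ℂ (a i) - starRingEnd ℂ (a j)) * (b i - b j) := by
        refine sum_congr rfl fun i _ => sum_congr rfl fun j _ => ?_
        simp only [K]; ring
    _ = ∑ i, starRingEnd ℂ (a i) * (c * ((m i : ℝ) : ℂ) * b i) := by
        rw [sum_lt_mul_sub_mul_sub_eq_sum_mul_sum_ne K hK]
        refine sum_congr rfl fun i _ => ?_
        rw [← heig i]
        congr 1
        refine sum_congr rfl fun j _ => ?_
        simp only [K]; ring
    _ = c * ∑ i, ((m i : ℝ) : ℂ) * starRingEnd ℂ (a i) * b i := by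
        rw [mul_sum]; exact sum_congr rfl fun i _ => by ring
    _ = 0 := by rw [horth, mul_zero]

theorem cross_term_vanishes (m : Fin 4 → ℝ) (a b : Fin 4 → ℂ) (c : ℂ)
    (hm : ∀ i, 0 < m i) (ha : ∀ i j, i ≠ j → a i ≠ a j)
    (heig : ∀ i, ∑ j ∈ Finset.univ.filter (· ≠ i),
        ((m i * m j : ℝ) : ℂ) * (b i - b j) / ((‖a i - a j‖ ^ 3 : ℝ) : ℂ) =
        c * ((m i : ℝ) : ℂ) * b i)
    (horth : ∑ i, ((m i : ℝ) : ℂ) * starRingEnd ℂ (a i) * b i = 0) :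
    ∑ i, ∑ j ∈ Finset.univ.filter (fun j => i < j),
        ((m i * m j : ℝ) : ℂ) * (starRingEnd ℂ (a i) - starRingEnd ℂ (a j)) * (b i - b j) /
          ((‖a i - a j‖ ^ 3 : ℝ) : ℂ) = 0 :=
  cross_term_vanishes_general m a b c heig horth
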